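/- Let H : [0,∞) → [0,∞) be continuous, nondecreasing, differentiable on (0,∞) with H(0)=0 and H(y) → ∞ as y → ∞, and let μ be a symmetric measure on ℝ with δ := sup_{y>0} H(y) μ((−y,y)ᶜ) < ∞. Define for x ≠ 0 the operator value (Gf)(x) := 2 ∫_ℝ min(H(|y|), H(|x|)) f(y) μ(dy). Then for f(y) = √(H(|y|)) one has (Gf)(x) ≤ 8δ √(H(|x|)) for all x ≠ 0. -/
import Mathlib


open MeasureTheory Real Set Filter

theorem green_operator_sqrt_harmonic_bound
    (H : ℝ → ℝ) (μ : Measure ℝ) (δ : ℝ)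
    (hH0 : H 0 = 0)
    (hHnonneg : ∀ y ∈ Set.Ici (0:ℝ), 0 ≤ H y)
    (hHcont : ContinuousOn H (Set.Ici (0:ℝ)))
    (hHmono : MonotoneOn H (Set.Ici (0:ℝ)))
    (hHdiff : ∀ y ∈ Set.Ioi (0:ℝ), DifferentiableAt ℝ H y)
    (hHtop : Tendsto H atTop atTop)
    (hsymm : μ.map (fun z => -z) = μ)
    (hδ : ∀ y > (0:ℝ), H y * (μ ((Set.Ioo (-y) y)ᶜ)).toReal ≤ δ) :
    ∀ x : ℝ, x ≠ 0 →
      2 * (∫ y, min (H |y|) (H |x|) * Real.sqrt (H |y|) ∂μ)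
        ≤ 8 * δ * Real.sqrt (H |x|) := by
  intro x hx
  have ha0 : 0 ≤ H |x| := hHnonneg _ (abs_nonneg x)
  have hδ0 : 0 ≤ δ :=
    le_trans (mul_nonneg (hHnonneg 1 (by norm_num)) ENNReal.toReal_nonneg) (hδ 1 one_pos)
  set a : ℝ := H |x| with ha_def
  rcases ha0.eq_or_lt with ha | ha
  · -- degenerate case a = 0
    have hzero : ∀ y : ℝ, min (H |y|) a * Real.sqrt (H |y|) = 0 := by
      intro y
      have h1 : 0 ≤ H |y| := hHnonneg _ (abs_nonneg y)
      rw [← ha, min_eq_right h1, zero_mul]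
    have : (∫ y, min (H |y|) a * Real.sqrt (H |y|) ∂μ) = 0 := by
      rw [integral_congr_ae (Eventually.of_forall hzero), integral_zero]
    rw [this, ← ha]
    simp
  -- main case 0 < a
  set g : ℝ → ℝ := fun y => min (H |y|) a * Real.sqrt (H |y|) with hg_def
  have hg0 : ∀ y, 0 ≤ g y := fun y =>
    mul_nonneg (le_min (hHnonneg _ (abs_nonneg y)) ha.le) (Real.sqrt_nonneg _)
  by_cases hint : Integrable g μ
  · -- key tail bound
    have key : ∀ s : ℝ, 0 < s →
        μ {y : ℝ | s < H |y|} ≠ ⊤ ∧ s * (μ {y : ℝ | s < H |y|}).toReal ≤ δ := by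
      intro s hs
      obtain ⟨R, hR0, hRs⟩ : ∃ R : ℝ, 0 ≤ R ∧ s ≤ H R := by
        obtain ⟨R, hR⟩ := ((hHtop.eventually_ge_atTop s).and (eventually_ge_atTop (0:ℝ))).exists
        exact ⟨R, hR.2, hR.1⟩
      obtain ⟨w, hw_mem, hw⟩ : ∃ w ∈ Set.Icc (0:ℝ) R, H w = s := by
        have := intermediate_value_Icc hR0 (hHcont.mono Set.Icc_subset_Ici_self)
        exact this ⟨by rw [hH0]; exact hs.le, hRs⟩
      have hw0 : 0 < w := by
        rcases hw_mem.1.eq_or_lt with h | h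
        · exfalso; rw [← h, hH0] at hw; exact hs.ne hw
        · exact h
      have sub1 : {y : ℝ | s < H |y|} ⊆ (Set.Ioo (-w) w)ᶜ := by
        intro y hy hmem
        have h1 : |y| < w := abs_lt.mpr ⟨hmem.1, hmem.2⟩
        have h2 : H |y| ≤ H w := hHmono (abs_nonneg y) hw0.le h1.le
        rw [hw] at h2
        exact absurd hy (not_lt.mpr h2)
      have hcpos : 0 < min s a * Real.sqrt s :=
        mul_pos (lt_min hs ha) (Real.sqrt_pos.mpr hs)
      have sub2 : (Set.Ioo (-w) w)ᶜ ⊆ {y : ℝ | min s a * Real.sqrt s ≤ g y} := by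
        intro y hy
        have hyw : w ≤ |y| := by
          rw [Set.mem_compl_iff, Set.mem_Ioo, not_and_or, not_lt, not_lt] at hy
          rcases hy with h | h
          · exact le_abs.mpr (Or.inr (by linarith))
          · exact le_abs.mpr (Or.inl h)
        have hb : s ≤ H |y| := by
          rw [← hw]; exact hHmono hw0.le (abs_nonneg y) hyw
        show min s a * Real.sqrt s ≤ g y
        exact mul_le_mul (min_le_min hb le_rfl) (Real.sqrt_le_sqrt hb) (Real.sqrt_nonneg s)
          (le_min (hHnonneg _ (abs_nonneg y)) ha.le)
      have hfin : μ ((Set.Ioo (-w) w)ᶜ) < ⊤ :=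
        lt_of_le_of_lt (measure_mono sub2) (hint.measure_ge_lt_top hcpos)
      have hfin1 : μ {y : ℝ | s < H |y|} ≠ ⊤ :=
        ne_top_of_le_ne_top hfin.ne (measure_mono sub1)
      refine ⟨hfin1, ?_⟩
      calc s * (μ {y : ℝ | s < H |y|}).toReal
          ≤ s * (μ ((Set.Ioo (-w) w)ᶜ)).toReal :=
            mul_le_mul_of_nonneg_left (ENNReal.toReal_mono hfin.ne (measure_mono sub1)) hs.le
        _ = H w * (μ ((Set.Ioo (-w) w)ᶜ)).toReal := by rw [hw]
        _ ≤ δ := hδ w hw0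
    have hgnn : 0 ≤ᵐ[μ] g := Eventually.of_forall hg0
    rw [hint.integral_eq_integral_meas_lt hgnn]
    set T : ℝ := a ^ ((3:ℝ)/2) with hT
    have hTpos : 0 < T := Real.rpow_pos_of_pos ha _
    set φ : ℝ → ℝ := fun t => δ * min (t ^ (-((2:ℝ)/3))) (a ^ 2 * t ^ (-(2:ℝ))) with hφ
    -- pointwise bound on the tail function
    have hFφ : ∀ t ∈ Set.Ioi (0:ℝ), (μ {y : ℝ | t < g y}).toReal ≤ φ t := by
      intro t ht
      rw [Set.mem_Ioi] at ht
      have h1 : {y : ℝ | t < g y} ⊆ {y : ℝ | t ^ ((2:ℝ)/3) < H |y|} := by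
        intro y hy
        by_contra hcon
        rw [Set.mem_setOf_eq, not_lt] at hcon
        have hle : g y ≤ t ^ ((2:ℝ)/3) * Real.sqrt (t ^ ((2:ℝ)/3)) :=
          mul_le_mul (le_trans (min_le_left _ _) hcon) (Real.sqrt_le_sqrt hcon)
            (Real.sqrt_nonneg _) (Real.rpow_nonneg ht.le _)
        have heq : t ^ ((2:ℝ)/3) * Real.sqrt (t ^ ((2:ℝ)/3)) = t := by
          rw [Real.sqrt_eq_rpow, ← Real.rpow_mul ht.le, ← Real.rpow_add ht]
          norm_num
        rw [heq] at hle
        exact absurd hy (not_lt.mpr hle)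
      have h2 : {y : ℝ | t < g y} ⊆ {y : ℝ | (t/a)^2 < H |y|} := by
        intro y hy
        have hb0 : 0 ≤ H |y| := hHnonneg _ (abs_nonneg y)
        have hga : g y ≤ a * Real.sqrt (H |y|) :=
          mul_le_mul_of_nonneg_right (min_le_right _ _) (Real.sqrt_nonneg _)
        have h3 : t < a * Real.sqrt (H |y|) := lt_of_lt_of_le hy hga
        have h4 : t / a < Real.sqrt (H |y|) := (div_lt_iff₀ ha).mpr (by linarith)
        exact (Real.lt_sqrt (div_nonneg ht.le ha.le)).mp h4
      have e1 := key _ (Real.rpow_pos_of_pos ht ((2:ℝ)/3))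
      have e2 := key _ (by positivity : (0:ℝ) < (t/a)^2)
      have b1 : (μ {y : ℝ | t < g y}).toReal ≤ δ * t ^ (-((2:ℝ)/3)) := by
        calc (μ {y : ℝ | t < g y}).toReal
            ≤ (μ {y : ℝ | t ^ ((2:ℝ)/3) < H |y|}).toReal :=
              ENNReal.toReal_mono e1.1 (measure_mono h1)
          _ ≤ δ / t ^ ((2:ℝ)/3) := by
              rw [le_div_iff₀ (Real.rpow_pos_of_pos ht _), mul_comm]; exact e1.2
          _ = δ * t ^ (-((2:ℝ)/3)) := by
              rw [Real.rpow_neg ht.le, div_eq_mul_inv]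
      have b2 : (μ {y : ℝ | t < g y}).toReal ≤ δ * (a ^ 2 * t ^ (-(2:ℝ))) := by
        have ht2 : t ^ (-(2:ℝ)) = (t ^ 2)⁻¹ := by
          rw [Real.rpow_neg ht.le, show (2:ℝ) = ((2:ℕ):ℝ) by norm_num, Real.rpow_natCast]
        calc (μ {y : ℝ | t < g y}).toReal
            ≤ (μ {y : ℝ | (t/a)^2 < H |y|}).toReal :=
              ENNReal.toReal_mono e2.1 (measure_mono h2)
          _ ≤ δ / (t/a)^2 := by
              rw [le_div_iff₀ (by positivity : (0:ℝ) < (t/a)^2), mul_comm]; exact e2.2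
          _ = δ * (a ^ 2 * t ^ (-(2:ℝ))) := by
              rw [ht2, div_pow]
              field_simp
      show (μ {y : ℝ | t < g y}).toReal ≤ δ * min (t ^ (-((2:ℝ)/3))) (a ^ 2 * t ^ (-(2:ℝ)))
      rw [mul_min_of_nonneg _ _ hδ0]
      exact le_min b1 b2
    -- integrability of the dominating function
    have hφm : Measurable φ := by
      apply Measurable.const_mul
      exact Measurable.min (measurable_id.pow_const _) ((measurable_id.pow_const _).const_mul _)
    have iφ1 : IntegrableOn (fun t : ℝ => t ^ (-((2:ℝ)/3))) (Set.Ioc 0 T) := by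
      have := intervalIntegral.intervalIntegrable_rpow' (a := 0) (b := T)
        (show (-1:ℝ) < -((2:ℝ)/3) by norm_num)
      rwa [intervalIntegrable_iff_integrableOn_Ioc_of_le hTpos.le] at this
    have iφ2 : IntegrableOn (fun t : ℝ => t ^ (-(2:ℝ))) (Set.Ioi T) :=
      integrableOn_Ioi_rpow_of_lt (by norm_num) hTpos
    have iφ1' : IntegrableOn φ (Set.Ioc 0 T) := by
      apply Integrable.mono' (iφ1.const_mul δ) hφm.aestronglyMeasurable
      filter_upwards [ae_restrict_mem measurableSet_Ioc] with t ht
      have ht0 : 0 < t := ht.1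
      have hmin0 : 0 ≤ min (t ^ (-((2:ℝ)/3))) (a ^ 2 * t ^ (-(2:ℝ))) :=
        le_min (Real.rpow_nonneg ht0.le _)
          (mul_nonneg (sq_nonneg a) (Real.rpow_nonneg ht0.le _))
      show ‖δ * min (t ^ (-((2:ℝ)/3))) (a ^ 2 * t ^ (-(2:ℝ)))‖ ≤ δ * t ^ (-((2:ℝ)/3))
      rw [Real.norm_eq_abs, abs_of_nonneg (mul_nonneg hδ0 hmin0)]
      exact mul_le_mul_of_nonneg_left (min_le_left _ _) hδ0
    have iφ2' : IntegrableOn φ (Set.Ioi T) := by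
      have : IntegrableOn (fun t : ℝ => (δ * a ^ 2) * t ^ (-(2:ℝ))) (Set.Ioi T) :=
        iφ2.const_mul _
      apply Integrable.mono' this hφm.aestronglyMeasurable
      filter_upwards [ae_restrict_mem measurableSet_Ioi] with t ht
      have ht0 : 0 < t := lt_trans hTpos ht
      have hmin0 : 0 ≤ min (t ^ (-((2:ℝ)/3))) (a ^ 2 * t ^ (-(2:ℝ))) :=
        le_min (Real.rpow_nonneg ht0.le _)
          (mul_nonneg (sq_nonneg a) (Real.rpow_nonneg ht0.le _))
      show ‖δ * min (t ^ (-((2:ℝ)/3))) (a ^ 2 * t ^ (-(2:ℝ)))‖ ≤ (δ * a ^ 2) * t ^ (-(2:ℝ))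
      rw [Real.norm_eq_abs, abs_of_nonneg (mul_nonneg hδ0 hmin0)]
      calc δ * min (t ^ (-((2:ℝ)/3))) (a ^ 2 * t ^ (-(2:ℝ)))
          ≤ δ * (a ^ 2 * t ^ (-(2:ℝ))) := mul_le_mul_of_nonneg_left (min_le_right _ _) hδ0
        _ = (δ * a ^ 2) * t ^ (-(2:ℝ)) := by ring
    have iφ : IntegrableOn φ (Set.Ioi 0) := by
      rw [← Set.Ioc_union_Ioi_eq_Ioi hTpos.le]
      exact iφ1'.union iφ2'
    -- compute the two pieces
    have p1 : ∫ t in Set.Ioc (0:ℝ) T, φ t ≤ δ * (3 * Real.sqrt a) := by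
      have hb : ∫ t in Set.Ioc (0:ℝ) T, δ * t ^ (-((2:ℝ)/3)) = δ * (3 * Real.sqrt a) := by
        rw [integral_const_mul]
        congr 1
        rw [← intervalIntegral.integral_of_le hTpos.le,
          integral_rpow (Or.inl (by norm_num : (-1:ℝ) < -((2:ℝ)/3))),
          show (-((2:ℝ)/3) + 1) = (1:ℝ)/3 by norm_num,
          Real.zero_rpow (by norm_num : (1:ℝ)/3 ≠ 0), hT,
          ← Real.rpow_mul ha0, Real.sqrt_eq_rpow]
        norm_num
        ring
      refine le_trans (setIntegral_mono_on iφ1' (iφ1.const_mul δ) measurableSet_Ioc ?_) hb.le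
      intro t ht
      exact mul_le_mul_of_nonneg_left (min_le_left _ _) hδ0
    have p2 : ∫ t in Set.Ioi T, φ t ≤ δ * Real.sqrt a := by
      have hb : ∫ t in Set.Ioi T, (δ * a ^ 2) * t ^ (-(2:ℝ)) = δ * Real.sqrt a := by
        rw [integral_const_mul, integral_Ioi_rpow_of_lt (by norm_num : (-2:ℝ) < -1) hTpos]
        have h1 : -T ^ (-2 + 1 : ℝ) / (-2 + 1) = a ^ (-((3:ℝ)/2)) := by
          rw [show (-2 + 1 : ℝ) = -1 by norm_num, hT, ← Real.rpow_mul ha0]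
          norm_num
        rw [h1, Real.sqrt_eq_rpow,
          show (a:ℝ) ^ 2 = a ^ ((2:ℕ):ℝ) from (Real.rpow_natCast a 2).symm,
          mul_assoc, ← Real.rpow_add ha]
        norm_num
      refine le_trans (setIntegral_mono_on iφ2' ?_ measurableSet_Ioi ?_) hb.le
      · exact iφ2.const_mul _
      · intro t ht
        calc φ t ≤ δ * (a ^ 2 * t ^ (-(2:ℝ))) :=
              mul_le_mul_of_nonneg_left (min_le_right _ _) hδ0
          _ = (δ * a ^ 2) * t ^ (-(2:ℝ)) := by ring
    calc 2 * ∫ t in Set.Ioi (0:ℝ), (μ {y : ℝ | t < g y}).toReal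
        ≤ 2 * ∫ t in Set.Ioi (0:ℝ), φ t := by
          refine mul_le_mul_of_nonneg_left ?_ (by norm_num)
          refine integral_mono_of_nonneg (Eventually.of_forall fun t => ENNReal.toReal_nonneg)
            iφ ?_
          filter_upwards [ae_restrict_mem measurableSet_Ioi] with t ht using hFφ t ht
      _ = 2 * ((∫ t in Set.Ioc (0:ℝ) T, φ t) + ∫ t in Set.Ioi T, φ t) := by
          rw [← Set.Ioc_union_Ioi_eq_Ioi hTpos.le,
            setIntegral_union (Set.Ioc_disjoint_Ioi le_rfl) measurableSet_Ioi iφ1' iφ2']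
      _ ≤ 2 * ((δ * (3 * Real.sqrt a)) + δ * Real.sqrt a) := by
          have := add_le_add p1 p2
          linarith
      _ = 8 * δ * Real.sqrt a := by ring
  · rw [integral_undef hint]
    have : (0:ℝ) ≤ 8 * δ * Real.sqrt a :=
      mul_nonneg (mul_nonneg (by norm_num) hδ0) (Real.sqrt_nonneg _)
    linarith
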